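/- (Definiteness of the stabilized norm on a reference configuration.) Let d ≥ 1, P ∈ ℕ₀, let Q̂ := (0,1)^d, and let Q̂' := Q̂ + z for some z ∈ {−1,0,1}^d with z ≠ 0 (so that clos Q̂ and clos Q̂' share at least one vertex). Let v be an element of the PUFEM space V_σ^P with σ = 1. If v ≡ 0 on Q̂' and ∂^α v ≡ 0 on Q̂ for every multi-index α with |α| = P+1, then v ≡ 0 on Q̂. -/

import Mathlib

open MeasureTheory Finset

noncomputable section

/-- Normalization constant of the one-dimensional Friedrichs mollifier. -/
def mollK : ℝ := ∫ t in Set.Ioo (-(1/2) : ℝ) (1/2), Real.exp (-(1 - 4 * t ^ 2)⁻¹)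

/-- One-dimensional Friedrichs mollifier. -/
def zeta1 (t : ℝ) : ℝ := if |t| < 1/2 then Real.exp (-(1 - 4 * t ^ 2)⁻¹) / mollK else 0

/-- `d`-dimensional Friedrichs mollifier (tensor product). -/
def zetaD (d : ℕ) (x : Fin d → ℝ) : ℝ := ∏ j, zeta1 (x j)

/-- Scaled mollifier ζ_σ. -/
def zetaScaled (d : ℕ) (σ : ℝ) (x : Fin d → ℝ) : ℝ := (σ ^ d)⁻¹ * zetaD d fun j => x j / σ

/-- The patch Ω_i. -/
def patch (d : ℕ) (σ : ℝ) (i : Fin d → ℤ) : Set (Fin d → ℝ) :=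
  Set.univ.pi fun j => Set.Ioo (((i j : ℝ) - 1) * σ) (((i j : ℝ) + 1) * σ)

/-- The patch core ω_i. -/
def patchCore (d : ℕ) (σ : ℝ) (i : Fin d → ℤ) : Set (Fin d → ℝ) :=
  Set.univ.pi fun j => Set.Ioo (((i j : ℝ) - 1/2) * σ) (((i j : ℝ) + 1/2) * σ)

/-- The element Q_i. -/
def element (d : ℕ) (σ : ℝ) (i : Fin d → ℤ) : Set (Fin d → ℝ) :=
  Set.univ.pi fun j => Set.Ioo ((i j : ℝ) * σ) (((i j : ℝ) + 1) * σ)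

/-- The partition of unity function φ_i = χ_{ω_i} ⋆ ζ_σ. -/
def pufun (d : ℕ) (σ : ℝ) (i : Fin d → ℤ) (x : Fin d → ℝ) : ℝ :=
  ∫ y in patchCore d σ i, zetaScaled d σ (x - y)

/-- Multi-index partial derivative ∂^α f. -/
def pdiff (d : ℕ) (α : Fin d → ℕ) (f : (Fin d → ℝ) → ℝ) (x : Fin d → ℝ) : ℝ :=
  iteratedFDeriv ℝ (∑ j, α j) f x fun m =>
    Pi.single (((Fintype.equivFinOfCardEq
      (by simp : Fintype.card ((j : Fin d) × Fin (α j)) = ∑ j, α j)).symm m).1) (1 : ℝ)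

/-- A PUFEM function with coefficients `c`. -/
def pufemFun (d P : ℕ) (σ : ℝ) (c : (Fin d → ℤ) → (Fin d → ℕ) → ℝ) : (Fin d → ℝ) → ℝ :=
  fun x => ∑' i : Fin d → ℤ, pufun d σ i x *
    ∑ n ∈ Finset.range (P + 1), ∑ α ∈ Finset.Nat.antidiagonalTuple d n,
      c i α * ∏ j, ((x j - (i j : ℝ) * σ) / σ) ^ α j

/-- Membership in the PUFEM space V_σ^P. -/
def memPufem (d P : ℕ) (σ : ℝ) (v : (Fin d → ℝ) → ℝ) : Prop :=
  ∃ c, v = pufemFun d P σ c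

/-- Membership in V_σ^P(S): only basis functions whose support meets S are used. -/
def memPufemOn (d P : ℕ) (σ : ℝ) (S : Set (Fin d → ℝ)) (v : (Fin d → ℝ) → ℝ) : Prop :=
  ∃ c, (∀ i : Fin d → ℤ, ¬(closure (patch d σ i) ∩ S).Nonempty → ∀ α, c i α = 0) ∧
    v = pufemFun d P σ c

/-- Squared L² norm over D. -/
def l2Sq (d : ℕ) (f : (Fin d → ℝ) → ℝ) (D : Set (Fin d → ℝ)) : ℝ := ∫ x in D, (f x) ^ 2

/-- Squared Sobolev seminorm |f|²_{W^{k,2}(D)}. -/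
def semiSq (d k : ℕ) (f : (Fin d → ℝ) → ℝ) (D : Set (Fin d → ℝ)) : ℝ :=
  ∑ α ∈ Finset.Nat.antidiagonalTuple d k, ∫ x in D, (pdiff d α f x) ^ 2

/-- Squared Sobolev norm ‖f‖²_{W^{k,2}(D)}. -/
def sobSq (d k : ℕ) (f : (Fin d → ℝ) → ℝ) (D : Set (Fin d → ℝ)) : ℝ :=
  ∑ n ∈ Finset.range (k + 1), semiSq d n f D

def sobNorm (d k : ℕ) (f : (Fin d → ℝ) → ℝ) (D : Set (Fin d → ℝ)) : ℝ :=
  Real.sqrt (sobSq d k f D)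

/-- W^{k,1} seminorm. -/
def w1Semi (d k : ℕ) (f : (Fin d → ℝ) → ℝ) (D : Set (Fin d → ℝ)) : ℝ :=
  ∑ α ∈ Finset.Nat.antidiagonalTuple d k, ∫ x in D, |pdiff d α f x|

/-- All partial derivatives up to order k are square integrable on D. -/
def sobFinite (d k : ℕ) (f : (Fin d → ℝ) → ℝ) (D : Set (Fin d → ℝ)) : Prop :=
  ∀ n ≤ k, ∀ α ∈ Finset.Nat.antidiagonalTuple d n,
    MeasureTheory.IntegrableOn (fun x => (pdiff d α f x) ^ 2) D

/-- Indices of elements meeting Ω (in positive measure). -/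
def elemIdx (d : ℕ) (σ : ℝ) (Ω : Set (Fin d → ℝ)) : Set (Fin d → ℤ) :=
  {i | 0 < volume (element d σ i ∩ Ω)}

/-- Indices of cut elements. -/
def cutIdx (d : ℕ) (σ : ℝ) (Ω : Set (Fin d → ℝ)) : Set (Fin d → ℤ) :=
  {i | i ∈ elemIdx d σ Ω ∧ ¬element d σ i ⊆ Ω}

/-- Indices of uncut elements. -/
def uncutIdx (d : ℕ) (σ : ℝ) (Ω : Set (Fin d → ℝ)) : Set (Fin d → ℤ) :=
  {i | i ∈ elemIdx d σ Ω ∧ element d σ i ⊆ Ω}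

/-- The fictitious domain Ω_σ. -/
def fictDom (d : ℕ) (σ : ℝ) (Ω : Set (Fin d → ℝ)) : Set (Fin d → ℝ) :=
  interior (⋃ i ∈ elemIdx d σ Ω, closure (element d σ i))

/-- The cut region Ω_σ^Γ. -/
def cutRegion (d : ℕ) (σ : ℝ) (Ω : Set (Fin d → ℝ)) : Set (Fin d → ℝ) :=
  interior (⋃ i ∈ cutIdx d σ Ω, closure (element d σ i))

/-- The uncut region Ω_σ^∘. -/
def uncutRegion (d : ℕ) (σ : ℝ) (Ω : Set (Fin d → ℝ)) : Set (Fin d → ℝ) :=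
  interior (⋃ i ∈ uncutIdx d σ Ω, closure (element d σ i))

/-- Two elements are neighbors if their closures share a grid point. -/
def neighbor (d : ℕ) (i i' : Fin d → ℤ) : Prop :=
  i ≠ i' ∧ ∀ j, |i j - i' j| ≤ 1

/-- The chain condition with constant K. -/
def chainCond (d : ℕ) (σ : ℝ) (Ω : Set (Fin d → ℝ)) (K : ℕ) : Prop :=
  ∀ i ∈ cutIdx d σ Ω, ∃ n : ℕ, n + 1 ≤ K ∧ ∃ q : Fin (n + 1) → Fin d → ℤ,
    q 0 = i ∧ (∀ m, q m ∈ cutIdx d σ Ω) ∧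
    (∀ m : Fin n, neighbor d (q m.castSucc) (q m.succ)) ∧
    ∃ i' ∈ uncutIdx d σ Ω, neighbor d (q (Fin.last n)) i'

/-- Ghost-penalty bilinear form. -/
def gpForm (d P : ℕ) (σ : ℝ) (Ω : Set (Fin d → ℝ)) (u v : (Fin d → ℝ) → ℝ) : ℝ :=
  σ ^ (2 * (P + 1)) * ∑ α ∈ Finset.Nat.antidiagonalTuple d (P + 1),
    ∫ x in cutRegion d σ Ω, pdiff d α u x * pdiff d α v x

/-- Stabilized bilinear form A. -/
def stabForm (d P : ℕ) (σ ε : ℝ) (Ω : Set (Fin d → ℝ)) (u v : (Fin d → ℝ) → ℝ) : ℝ :=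
  (∫ x in Ω, u x * v x) + ε * gpForm d P σ Ω u v

/-!
Elements of `V_1^P` are smooth: each `φ_i` is a mollified indicator, and only finitely many of
them are nonzero near any point. Since `v` vanishes on the open element `Q̂'`, all its derivatives
vanish at a vertex `p` shared by the closures of `Q̂` and `Q̂'`. On `Q̂` every partial derivative of
order `P + 1` vanishes, so by the symmetry of iterated derivatives the whole `(P + 1)`-st derivative
vanishes there. Descending in `k`, `D^k v` then has zero derivative on the convex set `Q̂`, so it is
constant there, and by continuity equal to its value `0` at `p`.
-/

open Equiv

open scoped ContDiff

theorem contDiff_tsum_of_locally_finite {𝕜 E F ι : Type*} [NontriviallyNormedField 𝕜]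
    [NormedAddCommGroup E] [NormedSpace 𝕜 E] [NormedAddCommGroup F] [NormedSpace 𝕜 F]
    {n : WithTop ℕ∞} {f : ι → E → F} (hf : ∀ i, ContDiff 𝕜 n (f i))
    (hloc : ∀ x, ∃ U ∈ nhds x, ∃ s : Finset ι, ∀ i ∉ s, ∀ y ∈ U, f i y = 0) :
    ContDiff 𝕜 n fun x => ∑' i, f i x := by
  refine contDiff_iff_contDiffAt.mpr fun x => ?_
  obtain ⟨U, hU, s, hs⟩ := hloc x
  refine (ContDiff.sum (s := s) fun i _ => hf i).contDiffAt.congr_of_eventuallyEq ?_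
  filter_upwards [hU] with y hy
  exact tsum_eq_sum fun i hi => hs i hi y hy

theorem zeta1_eq_expNegInvGlue : zeta1 = fun t => expNegInvGlue (1 - 4 * t ^ 2) / mollK := by
  ext t
  rw [zeta1, expNegInvGlue]
  by_cases ht : |t| < 1 / 2
  · rw [if_pos ht, if_neg (by nlinarith [sq_abs t, abs_nonneg t])]
  · rw [if_neg ht, if_pos (by nlinarith [sq_abs t, abs_nonneg t]), zero_div]

theorem contDiff_zeta1 : ContDiff ℝ ∞ zeta1 := by
  rw [zeta1_eq_expNegInvGlue]
  exact (expNegInvGlue.contDiff.comp (by fun_prop)).div_const _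

theorem contDiff_zetaScaled (d : ℕ) (σ : ℝ) : ContDiff ℝ ∞ (zetaScaled d σ) :=
  contDiff_const.mul (contDiff_prod fun j _ => contDiff_zeta1.comp (by fun_prop))

theorem zetaScaled_eq_zero {d : ℕ} {σ : ℝ} (hσ : 0 < σ) {x : Fin d → ℝ} {j : Fin d}
    (h : σ / 2 ≤ |x j|) : zetaScaled d σ x = 0 := by
  refine mul_eq_zero_of_right _ (prod_eq_zero (mem_univ j) (if_neg ?_))
  rw [not_lt, abs_div, abs_of_pos hσ, le_div_iff₀ hσ]
  linarith

theorem hasCompactSupport_zetaScaled (d : ℕ) {σ : ℝ} (hσ : 0 < σ) :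
    HasCompactSupport (zetaScaled d σ) := by
  refine HasCompactSupport.intro (isCompact_closedBall 0 (σ / 2)) fun x hx => ?_
  rw [mem_closedBall_zero_iff, pi_norm_le_iff_of_nonneg (by positivity), not_forall] at hx
  obtain ⟨j, hj⟩ := hx
  exact zetaScaled_eq_zero hσ (j := j) (not_le.mp hj).le

theorem measurableSet_patchCore (d : ℕ) (σ : ℝ) (i : Fin d → ℤ) :
    MeasurableSet (patchCore d σ i) :=
  MeasurableSet.univ_pi fun _ => measurableSet_Ioo

theorem pufun_eq_convolution (d : ℕ) (σ : ℝ) (i : Fin d → ℤ) :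
    pufun d σ i = convolution ((patchCore d σ i).indicator fun _ => (1 : ℝ))
      (zetaScaled d σ) (ContinuousLinearMap.lsmul ℝ ℝ) volume := by
  ext x
  rw [pufun, MeasureTheory.convolution, ← integral_indicator
    (measurableSet_patchCore d σ i)]
  congr 1 with y
  by_cases hy : y ∈ patchCore d σ i <;> simp [hy]

theorem contDiff_pufun (d : ℕ) {σ : ℝ} (hσ : 0 < σ) (i : Fin d → ℤ) :
    ContDiff ℝ ∞ (pufun d σ i) := by
  rw [pufun_eq_convolution]
  exact (hasCompactSupport_zetaScaled d hσ).contDiff_convolution_right _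
    ((locallyIntegrable_const 1).indicator
      (measurableSet_patchCore d σ i)) (contDiff_zetaScaled d σ)

theorem pufun_eq_zero {d : ℕ} {σ : ℝ} (hσ : 0 < σ) {i : Fin d → ℤ} {x : Fin d → ℝ} {j : Fin d}
    (h : σ ≤ |x j - i j * σ|) : pufun d σ i x = 0 := by
  refine setIntegral_eq_zero_of_forall_eq_zero fun y hy =>
    zetaScaled_eq_zero hσ (j := j) ?_
  have hyj := hy j (Set.mem_univ j)
  have hcore : |y j - i j * σ| < σ / 2 := abs_lt.mpr ⟨by linarith [hyj.1], by linarith [hyj.2]⟩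
  calc σ / 2 ≤ |x j - i j * σ| - |y j - i j * σ| := by linarith
    _ ≤ |(x j - i j * σ) - (y j - i j * σ)| := abs_sub_abs_le_abs_sub _ _
    _ = |(x - y) j| := by rw [Pi.sub_apply, sub_sub_sub_cancel_right]

theorem contDiff_pufemFun (d P : ℕ) {σ : ℝ} (hσ : 0 < σ) (c : (Fin d → ℤ) → (Fin d → ℕ) → ℝ) :
    ContDiff ℝ ∞ (pufemFun d P σ c) := by
  refine contDiff_tsum_of_locally_finite (fun i => (contDiff_pufun d hσ i).mul ?_) fun x => ?_
  · fun_prop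
  refine ⟨Metric.ball x σ, Metric.ball_mem_nhds x hσ,
    Fintype.piFinset fun j => Icc ⌈x j / σ - 2⌉ ⌊x j / σ + 2⌋, fun i hi y hy => ?_⟩
  obtain ⟨j, hj⟩ := not_forall.mp (mt Fintype.mem_piFinset.mpr hi)
  have hyx : |y j - x j| < σ := (dist_le_pi_dist y x j).trans_lt hy
  refine mul_eq_zero_of_left (pufun_eq_zero hσ (j := j) ?_) _
  rcases not_and_or.mp (mem_Icc.not.mp hj) with hlt | hlt
  · rw [not_le, Int.lt_ceil, lt_sub_iff_add_lt, lt_div_iff₀ hσ] at hlt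
    rw [abs_lt] at hyx
    exact le_abs.mpr (Or.inl (by linarith))
  · rw [not_le, Int.floor_lt, ← lt_sub_iff_add_lt, div_lt_iff₀ hσ] at hlt
    rw [abs_lt] at hyx
    exact le_abs.mpr (Or.inr (by linarith))

theorem isOpen_element (d : ℕ) (σ : ℝ) (i : Fin d → ℤ) : IsOpen (element d σ i) :=
  isOpen_set_pi Set.finite_univ fun _ _ => isOpen_Ioo

theorem convex_element (d : ℕ) (σ : ℝ) (i : Fin d → ℤ) : Convex ℝ (element d σ i) :=
  convex_pi fun _ _ => convex_Ioo _ _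

theorem closure_element (d : ℕ) {σ : ℝ} (hσ : 0 < σ) (i : Fin d → ℤ) :
    closure (element d σ i) = Set.univ.pi fun j => Set.Icc (i j * σ) ((i j + 1) * σ) := by
  rw [element, closure_pi_set]
  congr! with j
  exact closure_Ioo (by nlinarith)

theorem max_mul_mem_closure_element {d : ℕ} {σ : ℝ} (hσ : 0 < σ) {i i' : Fin d → ℤ}
    (h : ∀ j, |i j - i' j| ≤ 1) :
    (fun j => ((max (i j) (i' j) : ℤ) : ℝ) * σ) ∈ closure (element d σ i) := by
  rw [closure_element d hσ]
  intro j _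
  have hle : max (i j) (i' j) ≤ i j + 1 := max_le (by omega) (by linarith [(abs_le.mp (h j)).1])
  exact ⟨mul_le_mul_of_nonneg_right (by exact_mod_cast le_max_left _ _) hσ.le,
    mul_le_mul_of_nonneg_right (by exact_mod_cast hle) hσ.le⟩

theorem closure_element_inter_nonempty {d : ℕ} {σ : ℝ} (hσ : 0 < σ) {i i' : Fin d → ℤ}
    (h : ∀ j, |i j - i' j| ≤ 1) :
    (closure (element d σ i) ∩ closure (element d σ i')).Nonempty := by
  refine ⟨_, max_mul_mem_closure_element hσ h, ?_⟩
  convert max_mul_mem_closure_element hσ fun j => abs_sub_comm (i j) (i' j) ▸ h j using 1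
  ext j
  rw [max_comm]

theorem exists_perm_comp_eq_of_card_fiber {α β : Type*} [Fintype α] [DecidableEq β]
    (r r' : α → β) (h : ∀ j, #{s | r s = j} = #{s | r' s = j}) :
    ∃ π : Perm α, r' ∘ π = r := by
  have e : ∀ j, {s // r s = j} ≃ {s // r' s = j} := fun j =>
    Fintype.equivOfCardEq (by rw [Fintype.card_subtype, Fintype.card_subtype, h j])
  exact ⟨(sigmaFiberEquiv r).symm.trans ((sigmaCongrRight e).trans (sigmaFiberEquiv r')),
    funext fun s => (e (r s) ⟨s, rfl⟩).2⟩

theorem card_filter_sigma_fst {ι : Type*} [DecidableEq ι] {κ : ι → Type*} [∀ i, Fintype (κ i)]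
    {γ : Type*} [Fintype γ] (e : (Σ i, κ i) ≃ γ) (i : ι) :
    #{m | (e.symm m).1 = i} = Fintype.card (κ i) := by
  rw [← Fintype.card_subtype]
  exact Fintype.card_congr ((e.symm.subtypeEquiv fun _ => Iff.rfl).trans (sigmaSubtype i))

section Symmetry

universe u

variable {𝕜 : Type*} [RCLike 𝕜] {E : Type u} [NormedAddCommGroup E] [NormedSpace 𝕜 E]

theorem iteratedFDeriv_comp_swap_last_two {F : Type*} [NormedAddCommGroup F] [NormedSpace 𝕜 F]
    {f : E → F} (hf : ContDiff 𝕜 ∞ f) {n : ℕ} (x : E) (m : Fin (n + 2) → E) :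
    iteratedFDeriv 𝕜 (n + 2) f x (m ∘ swap (Fin.last n).castSucc (Fin.last (n + 1))) =
      iteratedFDeriv 𝕜 (n + 2) f x m := by
  set L : (E →L[𝕜] E →L[𝕜] F) ≃L[𝕜] (E →L[𝕜] E →L[𝕜] F) :=
    (ContinuousLinearMap.flipₗᵢ 𝕜 E E F).toContinuousLinearEquiv
  have hflip : fderiv 𝕜 (fderiv 𝕜 f) = L ∘ fderiv 𝕜 (fderiv 𝕜 f) := by
    ext y v w
    have h2 : minSmoothness 𝕜 2 ≤ ∞ := by
      rw [minSmoothness_of_isRCLikeNormedField]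
      exact WithTop.coe_le_coe.mpr le_top
    simpa [L] using hf.contDiffAt.isSymmSndFDerivAt h2 v w
  have hcomp := L.iteratedFDeriv_comp_left (𝕜 := 𝕜) (G := E →L[𝕜] E →L[𝕜] F)
    (f := fderiv 𝕜 (fderiv 𝕜 f)) (x := x) (i := n)
  rw [← hflip] at hcomp
  have hsplit : ∀ m' : Fin (n + 2) → E, iteratedFDeriv 𝕜 (n + 2) f x m' =
      iteratedFDeriv 𝕜 n (fderiv 𝕜 (fderiv 𝕜 f)) x (Fin.init (Fin.init m'))
        (m' (Fin.last n).castSucc) (m' (Fin.last (n + 1))) := fun m' => by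
    simp only [iteratedFDeriv_succ_apply_right]
    rfl
  have hinit : Fin.init (Fin.init (m ∘ swap (Fin.last n).castSucc (Fin.last (n + 1)))) =
      Fin.init (Fin.init m) := by
    ext i
    simp [Fin.init, swap_apply_of_ne_of_ne, (Fin.castSucc_lt_last i).ne,
      (Fin.castSucc_lt_last _).ne]
  rw [hsplit, hsplit, hinit]
  conv_lhs => rw [hcomp]
  simp [L]

-- `F` lives in the universe of `E` so that the induction can pass from `f` to `fderiv 𝕜 f`.
theorem iteratedFDeriv_comp_swap_castSucc_succ {F : Type u} [NormedAddCommGroup F]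
    [NormedSpace 𝕜 F] {f : E → F} (hf : ContDiff 𝕜 ∞ f) {n : ℕ} (i : Fin n) (x : E)
    (m : Fin (n + 1) → E) :
    iteratedFDeriv 𝕜 (n + 1) f x (m ∘ swap i.castSucc i.succ) =
      iteratedFDeriv 𝕜 (n + 1) f x m := by
  induction n generalizing F with
  | zero => exact i.elim0
  | succ n ih =>
    cases i using Fin.lastCases with
    | last => exact iteratedFDeriv_comp_swap_last_two hf x m
    | cast j =>
      have hinit : Fin.init (m ∘ swap j.castSucc.castSucc j.castSucc.succ) =
          Fin.init m ∘ swap j.castSucc j.succ := by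
        rw [← Fin.castSucc_succ]
        exact congrArg (m ∘ ·) ((Fin.castSucc_injective _).swap_comp _ _)
      have hlast : swap j.castSucc.castSucc j.castSucc.succ (Fin.last (n + 1)) =
          Fin.last (n + 1) := by
        rw [← Fin.castSucc_succ]
        exact swap_apply_of_ne_of_ne (Fin.castSucc_lt_last _).ne' (Fin.castSucc_lt_last _).ne'
      rw [iteratedFDeriv_succ_apply_right, iteratedFDeriv_succ_apply_right (m := m), hinit,
        Function.comp_apply, hlast, ih (hf.fderiv_right (by simp)) j]

theorem iteratedFDeriv_comp_perm {F : Type u} [NormedAddCommGroup F] [NormedSpace 𝕜 F]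
    {f : E → F} (hf : ContDiff 𝕜 ∞ f) {n : ℕ} (σ : Perm (Fin n)) (x : E) (m : Fin n → E) :
    iteratedFDeriv 𝕜 n f x (m ∘ σ) = iteratedFDeriv 𝕜 n f x m := by
  cases n with
  | zero => exact congrArg _ (Subsingleton.elim _ _)
  | succ n =>
    have hσ : σ ∈ Submonoid.closure (Set.range fun i : Fin n => swap i.castSucc i.succ) := by
      rw [Perm.mclosure_swap_castSucc_succ]
      trivial
    induction hσ using Submonoid.closure_induction generalizing m with
    | mem _ hswap =>
      obtain ⟨i, rfl⟩ := hswap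
      exact iteratedFDeriv_comp_swap_castSucc_succ hf i x m
    | one => rfl
    | mul σ τ _ _ hσ hτ => exact (hτ (m ∘ σ)).trans (hσ m)

theorem iteratedFDeriv_comp_eq_of_card_fiber {F : Type u} [NormedAddCommGroup F]
    [NormedSpace 𝕜 F] {f : E → F} (hf : ContDiff 𝕜 ∞ f) {ι : Type*} [DecidableEq ι]
    (b : ι → E) {n n' : ℕ} (hn : n = n') (r : Fin n → ι) (r' : Fin n' → ι)
    (h : ∀ j, #{s | r s = j} = #{s | r' s = j}) (x : E) :
    iteratedFDeriv 𝕜 n f x (b ∘ r) = iteratedFDeriv 𝕜 n' f x (b ∘ r') := by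
  subst hn
  obtain ⟨π, hπ⟩ := exists_perm_comp_eq_of_card_fiber r r' h
  rw [← hπ, ← Function.comp_assoc, iteratedFDeriv_comp_perm hf]

end Symmetry

-- `pdiff` lists the directions of `∂^α` in an arbitrary order, hence the appeal to symmetry.
theorem iteratedFDeriv_eq_zero_of_pdiff_eq_zero {d n : ℕ} {f : (Fin d → ℝ) → ℝ}
    (hf : ContDiff ℝ ∞ f) {x : Fin d → ℝ}
    (h : ∀ α : Fin d → ℕ, ∑ j, α j = n → pdiff d α f x = 0) : iteratedFDeriv ℝ n f x = 0 := by
  refine ContinuousMultilinearMap.toMultilinearMap_injective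
    (Module.Basis.ext_multilinear (fun _ => Pi.basisFun ℝ (Fin d)) fun r => ?_)
  set a : Fin d → ℕ := fun j => #{s | r s = j}
  have ha : ∑ j, a j = n := by
    rw [← card_eq_sum_card_fiberwise (s := univ) (t := univ) fun s _ => mem_univ (r s)]
    simp
  simp only [Pi.basisFun_apply, ContinuousMultilinearMap.coe_coe,
    ContinuousMultilinearMap.toMultilinearMap_zero, zero_apply]
  rw [← h a ha]
  exact iteratedFDeriv_comp_eq_of_card_fiber hf (fun j => Pi.single j 1) ha.symm r
    (fun m => ((Fintype.equivFinOfCardEq (α := (j : Fin d) × Fin (a j)) (by simp)).symm m).1)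
    (fun j => by rw [card_filter_sigma_fst, Fintype.card_fin]) x

theorem iteratedFDeriv_eq_zero_of_eqOn_zero_of_mem_closure {𝕜 E F : Type*}
    [NontriviallyNormedField 𝕜] [NormedAddCommGroup E] [NormedSpace 𝕜 E] [NormedAddCommGroup F]
    [NormedSpace 𝕜 F] {f : E → F} (hf : ContDiff 𝕜 ∞ f) {V : Set E} (hV : IsOpen V)
    (h : Set.EqOn f 0 V) {c : E} (hc : c ∈ closure V) (k : ℕ) :
    iteratedFDeriv 𝕜 k f c = 0 := by
  have hV' : Set.EqOn (iteratedFDeriv 𝕜 k f) 0 V := fun y hy => by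
    rw [((h.eventuallyEq_of_mem (hV.mem_nhds hy)).iteratedFDeriv 𝕜 k).eq_of_nhds]
    exact congrFun iteratedFDeriv_fun_zero y
  exact hV'.closure (hf.continuous_iteratedFDeriv (by exact_mod_cast le_top)) continuous_const hc

theorem eqOn_zero_of_iteratedFDeriv_eqOn_zero {E F : Type*} [NormedAddCommGroup E]
    [NormedSpace ℝ E] [NormedAddCommGroup F] [NormedSpace ℝ F] {f : E → F}
    (hf : ContDiff ℝ ∞ f) {U : Set E} (hU : IsOpen U)
    (hU' : IsPreconnected U) {c : E} (hc : c ∈ closure U) {n : ℕ}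
    (hc0 : ∀ k < n, iteratedFDeriv ℝ k f c = 0) (hn : Set.EqOn (iteratedFDeriv ℝ n f) 0 U) :
    Set.EqOn f 0 U := by
  have hdesc : ∀ k ≤ n, Set.EqOn (iteratedFDeriv ℝ k f) 0 U := by
    intro k hk
    induction hk using Nat.decreasingInduction with
    | self => exact hn
    | of_succ k hk ih =>
      have hderiv : Set.EqOn (fderiv ℝ (iteratedFDeriv ℝ k f)) 0 U := fun y hy => by
        rw [fderiv_iteratedFDeriv, Function.comp_apply, ih hy, Pi.zero_apply,
          LinearIsometryEquiv.map_zero, Pi.zero_apply]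
      obtain ⟨a, ha⟩ := hU.exists_is_const_of_fderiv_eq_zero hU'
        (hf.differentiable_iteratedFDeriv (by exact_mod_cast WithTop.coe_lt_top _)).differentiableOn
        hderiv
      have hca : iteratedFDeriv ℝ k f c = a :=
        (show Set.EqOn _ (fun _ => a) U from ha).closure
          (hf.continuous_iteratedFDeriv (by exact_mod_cast le_top)) continuous_const hc
      exact fun y hy => (ha y hy).trans (hca.symm.trans (hc0 k hk))
  exact fun y hy => norm_eq_zero.mp (by
    rw [← norm_iteratedFDeriv_zero (𝕜 := ℝ), hdesc 0 n.zero_le hy, Pi.zero_apply, norm_zero])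

theorem stabilized_norm_definite_general (d P : ℕ) (z : Fin d → ℤ)
    (hz : ∀ j, z j = -1 ∨ z j = 0 ∨ z j = 1)
    (v : (Fin d → ℝ) → ℝ) (hv : memPufem d P 1 v)
    (hzero : ∀ x ∈ element d 1 z, v x = 0)
    (hderiv : ∀ α : Fin d → ℕ, (∑ j, α j) = P + 1 →
      ∀ x ∈ element d 1 (0 : Fin d → ℤ), pdiff d α v x = 0) :
    ∀ x ∈ element d 1 (0 : Fin d → ℤ), v x = 0 := by
  obtain ⟨c, rfl⟩ := hv
  have hsmooth := contDiff_pufemFun d P one_pos c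
  obtain ⟨p, hpQ, hpQ'⟩ := closure_element_inter_nonempty (d := d) one_pos (i := 0) (i' := z)
    fun j => by rcases hz j with h | h | h <;> simp [h]
  have hvanish : ∀ k, iteratedFDeriv ℝ k (pufemFun d P 1 c) p = 0 :=
    iteratedFDeriv_eq_zero_of_eqOn_zero_of_mem_closure hsmooth (isOpen_element d 1 z)
      (fun x hx => hzero x hx) hpQ'
  exact fun x hx => eqOn_zero_of_iteratedFDeriv_eqOn_zero hsmooth (isOpen_element d 1 0)
    (convex_element d 1 0).isPreconnected hpQ (fun k _ => hvanish k)
    (fun y hy => iteratedFDeriv_eq_zero_of_pdiff_eq_zero hsmooth fun α hα => hderiv α hα y hy) hx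

/-- definiteness of the stabilized norm on a reference configuration. -/
theorem stabilized_norm_definite (d P : ℕ) (hd : 1 ≤ d) (z : Fin d → ℤ)
    (hz : ∀ j, z j = -1 ∨ z j = 0 ∨ z j = 1) (hz0 : z ≠ 0)
    (v : (Fin d → ℝ) → ℝ) (hv : memPufem d P 1 v)
    (hzero : ∀ x ∈ element d 1 z, v x = 0)
    (hderiv : ∀ α : Fin d → ℕ, (∑ j, α j) = P + 1 →
      ∀ x ∈ element d 1 (0 : Fin d → ℤ), pdiff d α v x = 0) :
    ∀ x ∈ element d 1 (0 : Fin d → ℤ), v x = 0 :=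
  stabilized_norm_definite_general d P z hz v hv hzero hderiv

end
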